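/- For every μ with 1/2 < μ < 1, the commuter h_μ is discontinuous at x = 1/2; in fact it has a jump discontinuity there: the left-hand limit of h_μ at 1/2 is strictly less than the right-hand limit of h_μ at 1/2. -/

import Mathlib

open Set Filter Topology

/-- `h : [0,1] → [0,1]` satisfies the commuter functional equation for `T_μ`:
`h(x) = (1/2)·h(2μx)` for `0 ≤ x ≤ 1/2` and `h(x) = 1 - (1/2)·h(2μ(1-x))` for `1/2 < x ≤ 1`. -/
def IsCommuter (μ : ℝ) (h : ℝ → ℝ) : Prop :=
  (∀ x ∈ Icc (0:ℝ) 1, h x ∈ Icc (0:ℝ) 1) ∧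
  (∀ x : ℝ, 0 ≤ x → x ≤ 1/2 → h x = (1/2) * h (2*μ*x)) ∧
  (∀ x : ℝ, 1/2 < x → x ≤ 1 → h x = 1 - (1/2) * h (2*μ*(1-x)))

/-!
On either side of any point of `(0,1)`, the functional equation writes `h` as an affine function,
with slope `±1/2`, of `h` on one side of another point of `(0,1)`. Iterating, `h` oscillates by at
most `2⁻ⁿ` on small one-sided neighbourhoods, so all one-sided limits exist in `(0,1)`.
Since `h x + h (1 - x) = 1` for `x < 1/2`, the one-sided limits at `1/2` are `a` and `1 - a`.
Finally `a < 1/2`: just below `1/2`, `h x = 1/2 - h z / 4` with `z = 2μ(1 - 2μx) > 2μ(1 - μ)`, and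
`h z ≥ 2⁻ⁿ⁻¹` as soon as `(2μ)ⁿ z > 1/2`, by iterating `z ↦ 2μz` into `(1/2, 1]`, where `h ≥ 1/2`.
-/

section Oscillation

variable {α E : Type*}

def OscillationLE [PseudoMetricSpace E] (f : α → E) (F : Filter α) (δ : ℝ) : Prop :=
  ∃ s ∈ F, ∀ x ∈ s, ∀ y ∈ s, dist (f x) (f y) ≤ δ

theorem OscillationLE.mono [PseudoMetricSpace E] {f : α → E} {F : Filter α} {δ δ' : ℝ}
    (hf : OscillationLE f F δ) (hδ : δ ≤ δ') : OscillationLE f F δ' :=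
  let ⟨s, hs, hsf⟩ := hf
  ⟨s, hs, fun x hx y hy => (hsf x hx y hy).trans hδ⟩

theorem exists_tendsto_of_forall_oscillationLE [PseudoMetricSpace E] [CompleteSpace E]
    {f : α → E} {F : Filter α} [F.NeBot] (hf : ∀ ε > 0, OscillationLE f F ε) :
    ∃ a, Tendsto f F (𝓝 a) := by
  refine CompleteSpace.complete (Metric.cauchy_iff.2 ⟨map_neBot, fun ε hε => ?_⟩)
  obtain ⟨s, hs, hsf⟩ := hf (ε / 2) (half_pos hε)
  refine ⟨f '' s, image_mem_map hs, ?_⟩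
  rintro _ ⟨x, hx, rfl⟩ _ ⟨y, hy, rfl⟩
  exact (hsf x hx y hy).trans_lt (half_lt_self hε)

variable [SeminormedAddCommGroup E] [NormedSpace ℝ E]

theorem OscillationLE.of_eventually_eq_affine {f : α → E} {φ : α → α} {F G : Filter α}
    {c : E} {e δ : ℝ} (hG : OscillationLE f G δ) (hφ : Tendsto φ F G)
    (hf : ∀ᶠ x in F, f x = c + e • f (φ x)) : OscillationLE f F (|e| * δ) := by
  obtain ⟨t, ht, htf⟩ := hG
  refine ⟨{x | f x = c + e • f (φ x)} ∩ φ ⁻¹' t, inter_mem hf (hφ ht), ?_⟩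
  rintro x ⟨hfx, hx⟩ y ⟨hfy, hy⟩
  rw [hfx, hfy, dist_add_left, dist_smul₀, Real.norm_eq_abs]
  exact mul_le_mul_of_nonneg_left (htf _ hx _ hy) (abs_nonneg e)

def IsSelfAffineOn (f : α → E) (S : Set (Filter α)) (r : ℝ) : Prop :=
  ∀ F ∈ S, ∃ G ∈ S, ∃ φ : α → α, ∃ c : E, ∃ e : ℝ,
    |e| ≤ r ∧ Tendsto φ F G ∧ ∀ᶠ x in F, f x = c + e • f (φ x)

theorem IsSelfAffineOn.oscillationLE_pow {f : α → E} {S : Set (Filter α)} {r δ : ℝ}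
    (hf : IsSelfAffineOn f S r) (hr : 0 ≤ r) (hδ : 0 ≤ δ) (hS : ∀ F ∈ S, OscillationLE f F δ)
    (n : ℕ) : ∀ F ∈ S, OscillationLE f F (r ^ n * δ) := by
  induction n with
  | zero => simpa using hS
  | succ n ih =>
    intro F hF
    obtain ⟨G, hG, φ, c, e, he, hφ, hfe⟩ := hf F hF
    refine ((ih G hG).of_eventually_eq_affine hφ hfe).mono ?_
    rw [pow_succ, mul_comm (r ^ n) r, mul_assoc]
    exact mul_le_mul_of_nonneg_right he (by positivity)

theorem IsSelfAffineOn.exists_tendsto [CompleteSpace E] {f : α → E} {S : Set (Filter α)}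
    {r δ : ℝ} (hf : IsSelfAffineOn f S r) (hr₀ : 0 ≤ r) (hr₁ : r < 1)
    (hS : ∀ F ∈ S, OscillationLE f F δ) (hδ : 0 ≤ δ) {F : Filter α} [F.NeBot] (hF : F ∈ S) :
    ∃ a, Tendsto f F (𝓝 a) := by
  refine exists_tendsto_of_forall_oscillationLE fun ε hε => ?_
  obtain ⟨n, hn⟩ := exists_pow_lt_of_lt_one (div_pos hε (by positivity : (0:ℝ) < δ + 1)) hr₁
  rw [lt_div_iff₀ (by positivity)] at hn
  exact (hf.oscillationLE_pow hr₀ hδ hS n F hF).mono (by nlinarith [pow_nonneg hr₀ n])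

end Oscillation

section OneSided

variable {α β : Type*} [TopologicalSpace α] [LinearOrder α]

theorem not_continuousWithinAt_of_tendsto_nhdsLT_nhdsGT [TopologicalSpace β] [T2Space β]
    {f : α → β} {u : Set α} {x : α} {a b : β} [(𝓝[<] x).NeBot] [(𝓝[>] x).NeBot] (hu : u ∈ 𝓝 x)
    (ha : Tendsto f (𝓝[<] x) (𝓝 a)) (hb : Tendsto f (𝓝[>] x) (𝓝 b)) (hab : a ≠ b) :
    ¬ ContinuousWithinAt f u x := by
  rw [continuousWithinAt_iff_continuousAt hu]
  exact fun hf => hab <| (tendsto_nhds_unique ha (hf.mono_left nhdsWithin_le_nhds)).trans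
    (tendsto_nhds_unique hb (hf.mono_left nhdsWithin_le_nhds)).symm

def oneSidedNhds (q : α) : Set (Filter α) := {𝓝[<] q, 𝓝[>] q}

theorem mem_of_mem_nhds_of_mem_oneSidedNhds {q : α} {s : Set α} (hs : s ∈ 𝓝 q)
    {F : Filter α} (hF : F ∈ oneSidedNhds q) : s ∈ F := by
  rcases hF with rfl | rfl <;> exact mem_nhdsWithin_of_mem_nhds hs

theorem exists_tendsto_oneSidedNhds [TopologicalSpace β] [LinearOrder β] {φ : α → β} {q : α}
    (hc : ContinuousAt φ q) (hφ : StrictMono φ ∨ StrictAnti φ) {F : Filter α}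
    (hF : F ∈ oneSidedNhds q) : ∃ G ∈ oneSidedNhds (φ q), Tendsto φ F G := by
  rcases hF with rfl | rfl <;> rcases hφ with hφ | hφ
  · exact ⟨_, .inl rfl, hc.continuousWithinAt.tendsto_nhdsWithin fun _ hx => hφ hx⟩
  · exact ⟨_, .inr rfl, hc.continuousWithinAt.tendsto_nhdsWithin fun _ hx => hφ hx⟩
  · exact ⟨_, .inr rfl, hc.continuousWithinAt.tendsto_nhdsWithin fun _ hx => hφ hx⟩
  · exact ⟨_, .inl rfl, hc.continuousWithinAt.tendsto_nhdsWithin fun _ hx => hφ hx⟩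

theorem eventually_mem_Icc_or_Ioc_of_mem_oneSidedNhds [OrderTopology α] {a b c q : α}
    (hq : q ∈ Ioo a c) {F : Filter α} (hF : F ∈ oneSidedNhds q) :
    (q ≤ b ∧ ∀ᶠ x in F, x ∈ Icc a b) ∨ (b ≤ q ∧ ∀ᶠ x in F, x ∈ Ioc b c) := by
  rcases hF with rfl | rfl
  · rcases le_or_gt q b with hqb | hqb
    · exact .inl ⟨hqb, mem_of_superset (Ioo_mem_nhdsLT hq.1)
        fun x hx => ⟨hx.1.le, hx.2.le.trans hqb⟩⟩
    · exact .inr ⟨hqb.le, mem_of_superset (Ioo_mem_nhdsLT hqb)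
        fun x hx => ⟨hx.1, hx.2.le.trans hq.2.le⟩⟩
  · rcases lt_or_ge q b with hqb | hqb
    · exact .inl ⟨hqb.le, mem_of_superset (Ioo_mem_nhdsGT hqb)
        fun x hx => ⟨hq.1.le.trans hx.1.le, hx.2.le⟩⟩
    · exact .inr ⟨hqb, mem_of_superset (Ioo_mem_nhdsGT hq.2)
        fun x hx => ⟨hqb.trans_lt hx.1, hx.2.le⟩⟩

end OneSided

namespace IsCommuter

variable {μ : ℝ} {h : ℝ → ℝ}

theorem isSelfAffineOn (hμ₀ : 0 < μ) (hμ₁ : μ < 1) (hh : IsCommuter μ h) :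
    IsSelfAffineOn h {F | ∃ q ∈ Ioo (0:ℝ) 1, F ∈ oneSidedNhds q} (1/2) := by
  rintro F ⟨q, hq, hF⟩
  rcases eventually_mem_Icc_or_Ioc_of_mem_oneSidedNhds (b := 1/2) hq hF with
    ⟨hqb, hev⟩ | ⟨hqb, hev⟩
  · obtain ⟨G, hG, hφ⟩ := exists_tendsto_oneSidedNhds (φ := (2*μ * ·))
      (continuous_const_mul _).continuousAt (.inl (strictMono_mul_left_of_pos (by linarith))) hF
    refine ⟨G, ⟨2*μ*q, ⟨by nlinarith [hq.1], by nlinarith⟩, hG⟩, _, 0, 1/2, by norm_num, hφ, ?_⟩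
    filter_upwards [hev] with x hx
    rw [hh.2.1 x hx.1 hx.2, smul_eq_mul, zero_add]
  · obtain ⟨G, hG, hφ⟩ := exists_tendsto_oneSidedNhds (φ := fun x => 2*μ*(1-x))
      (by fun_prop) (.inr fun x y hxy => by nlinarith) hF
    refine ⟨G, ⟨2*μ*(1-q), ⟨by nlinarith [hq.2], by nlinarith⟩, hG⟩, _, 1, -(1/2), by norm_num,
      hφ, ?_⟩
    filter_upwards [hev] with x hx
    rw [hh.2.2 x hx.1 hx.2, smul_eq_mul]
    ring

theorem exists_tendsto_nhdsLT (hμ₀ : 0 < μ) (hμ₁ : μ < 1) (hh : IsCommuter μ h) {q : ℝ}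
    (hq : q ∈ Ioo 0 1) : ∃ a, Tendsto h (𝓝[<] q) (𝓝 a) := by
  refine (hh.isSelfAffineOn hμ₀ hμ₁).exists_tendsto (by norm_num) (by norm_num) ?_ zero_le_one
    ⟨q, hq, .inl rfl⟩
  rintro F ⟨p, hp, hF⟩
  refine ⟨Icc 0 1, mem_of_mem_nhds_of_mem_oneSidedNhds (Icc_mem_nhds hp.1 hp.2) hF, ?_⟩
  exact fun x hx y hy => Real.dist_le_of_mem_Icc_01 (hh.1 x hx) (hh.1 y hy)

theorem apply_add_apply_one_sub (hh : IsCommuter μ h) {x : ℝ} (hx₀ : 0 ≤ x) (hx : x < 1/2) :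
    h x + h (1 - x) = 1 := by
  rw [hh.2.1 x hx₀ hx.le, hh.2.2 (1 - x) (by linarith) (by linarith), sub_sub_cancel]
  ring

theorem tendsto_nhdsGT_half (hh : IsCommuter μ h) {a : ℝ}
    (ha : Tendsto h (𝓝[<] (1/2)) (𝓝 a)) : Tendsto h (𝓝[>] (1/2)) (𝓝 (1 - a)) := by
  have hreflect : Tendsto (fun x : ℝ => 1 - x) (𝓝[>] (1/2)) (𝓝[<] (1/2)) :=
    tendsto_nhdsWithin_iff.2
      ⟨((continuous_sub_left 1).tendsto' _ _ (by norm_num)).mono_left nhdsWithin_le_nhds,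
        eventually_nhdsWithin_of_forall fun x (hx : 1/2 < x) => show 1 - x < 1/2 by linarith⟩
  refine (tendsto_const_nhds.sub (ha.comp hreflect)).congr' ?_
  filter_upwards [Ioo_mem_nhdsGT (by norm_num : (1/2 : ℝ) < 1)] with x hx
  have := hh.apply_add_apply_one_sub (x := 1 - x) (by linarith [hx.2]) (by linarith [hx.1])
  rw [sub_sub_cancel] at this
  simp only [Function.comp_apply]
  linarith

theorem half_le_apply (hμ₀ : 0 ≤ μ) (hμ₁ : μ ≤ 1) (hh : IsCommuter μ h) {z : ℝ}
    (hz₁ : 1/2 < z) (hz₂ : z ≤ 1) : 1/2 ≤ h z := by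
  have harg : 2*μ*(1-z) ∈ Icc (0:ℝ) 1 := ⟨by nlinarith, by nlinarith⟩
  rw [hh.2.2 z hz₁ hz₂]
  linarith [(hh.1 _ harg).2]

theorem half_pow_succ_le_apply (hμ₀ : 0 ≤ μ) (hμ₁ : μ ≤ 1) (hh : IsCommuter μ h) (n : ℕ)
    {z : ℝ} (hz₀ : 0 ≤ z) (hz₁ : z ≤ 1) (hn : 1/2 < (2*μ)^n * z) : (1/2)^(n+1) ≤ h z := by
  induction n generalizing z with
  | zero => simpa using hh.half_le_apply hμ₀ hμ₁ (by simpa using hn) hz₁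
  | succ n ih =>
    rcases lt_or_ge (1/2) z with hz | hz
    · calc (1/2 : ℝ)^(n+1+1) ≤ 1/2 := pow_le_of_le_one (by norm_num) (by norm_num) (by omega)
        _ ≤ h z := hh.half_le_apply hμ₀ hμ₁ hz hz₁
    · have := ih (z := 2*μ*z) (by positivity) (by nlinarith) (by rwa [← mul_assoc, ← pow_succ])
      rw [hh.2.1 z hz₀ hz, pow_succ]
      linarith

theorem exists_pos_eventually_le_nhdsLT_half (hμ₁ : 1/2 < μ) (hμ₂ : μ < 1)
    (hh : IsCommuter μ h) : ∃ δ > 0, ∀ᶠ x in 𝓝[<] (1/2 : ℝ), h x ≤ 1/2 - δ := by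
  have hpos : 0 < 2*μ*(1-μ) := by nlinarith
  obtain ⟨n, hn⟩ := pow_unbounded_of_one_lt (1 / (2 * (2*μ*(1-μ)))) (by linarith : (1:ℝ) < 2*μ)
  rw [div_lt_iff₀ (by positivity)] at hn
  refine ⟨(1/2)^(n+3), by positivity, ?_⟩
  have hquarter : 1 / (4*μ) < 1/2 := by rw [div_lt_div_iff₀ (by positivity) two_pos]; linarith
  filter_upwards [Ioo_mem_nhdsLT hquarter] with x ⟨hx₁, hx₂⟩
  rw [div_lt_iff₀ (by positivity)] at hx₁
  set y := 2*μ*x with hy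
  set z := 2*μ*(1-y) with hz
  have hyμ : y < μ := by nlinarith
  have hzn : 1/2 < (2*μ)^n * z := by
    have : 2*μ*(1-μ) < z := by nlinarith [mul_pos (by linarith : (0:ℝ) < 2*μ) (sub_pos.2 hyμ)]
    nlinarith [pow_pos (by linarith : (0:ℝ) < 2*μ) n]
  have hhz := hh.half_pow_succ_le_apply (by linarith) hμ₂.le n (by nlinarith) (by nlinarith) hzn
  rw [hh.2.1 x (by nlinarith) hx₂.le, ← hy, hh.2.2 y (by nlinarith) (by nlinarith), ← hz]
  have : (1/2 : ℝ)^(n+3) = (1/2)^(n+1) / 4 := by ring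
  linarith [pow_pos (by norm_num : (0:ℝ) < 1/2) (n+1)]

end IsCommuter

/-- For `1/2 < μ < 1`, the commuter `h_μ` is discontinuous at `1/2`; in fact it has a jump
discontinuity there: the left-hand limit (along the domain `[0,1]`) is strictly less than
the right-hand limit. -/
theorem commuter_jump_at_half (μ : ℝ) (hμ1 : 1/2 < μ) (hμ2 : μ < 1)
    (h : ℝ → ℝ) (hc : IsCommuter μ h) :
    ¬ ContinuousWithinAt h (Icc (0:ℝ) 1) (1/2) ∧
    ∃ a b : ℝ,
      Tendsto h (nhdsWithin (1/2 : ℝ) (Ico (0:ℝ) (1/2))) (nhds a) ∧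
      Tendsto h (nhdsWithin (1/2 : ℝ) (Ioc (1/2 : ℝ) 1)) (nhds b) ∧
      a < b := by
  obtain ⟨a, ha⟩ := hc.exists_tendsto_nhdsLT (by linarith) hμ2 (by norm_num : (1/2 : ℝ) ∈ Ioo 0 1)
  have hb := hc.tendsto_nhdsGT_half ha
  obtain ⟨δ, hδ, hle⟩ := hc.exists_pos_eventually_le_nhdsLT_half hμ1 hμ2
  have hab : a < 1 - a := by linarith [le_of_tendsto ha hle]
  rw [nhdsWithin_Ico_eq_nhdsLT (by norm_num), nhdsWithin_Ioc_eq_nhdsGT (by norm_num)]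
  exact ⟨not_continuousWithinAt_of_tendsto_nhdsLT_nhdsGT (Icc_mem_nhds (by norm_num) (by norm_num))
    ha hb hab.ne, a, 1 - a, ha, hb, hab⟩
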